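/- arXiv:1405.1799 — 2 statements merged into one kernel-verified Lean document; each statement's English description precedes it below -/
import Mathlib

section
/- Let a ≥ 1/2, a ≤ 1, and 0 < σ < 1. Then for all real t, |Γ(σ + it) ζ(σ + it, a)| ≤ Γ(σ)|ζ(σ, a)|. -/
/-!
For `re s > 1`, `Γ(s) ζ(s, a)` is the Mellin transform of
`K(a, x) = e^{-ax} / (1 - e^{-x}) = ∑ₙ e^{-(n + a) x}`. The kernel equal to `H = K - 1/x` on
`(0, 1]` and to `K` on `(1, ∞)` is bounded near `0` and decays exponentially, so its Mellin
transform is holomorphic on `re s > 0`; it differs by `1 / (s - 1)` from the Mellin transform of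
`K` when `re s > 1` and from that of `H` when `0 < re s < 1`. By the identity theorem on
`{re s > 0} \ {1}`, `Γ(s) ζ(s, a)` is the Mellin transform of `H(a, ·)` on the critical strip.
For `a ≥ 1/2`, `H(a, ·) ≤ 0` (at `a = 1/2` this is `x ≤ 2 sinh (x / 2)`), hence
`|∫ H(a, x) x^{s-1} dx| ≤ ∫ |H(a, x)| x^{σ-1} dx = |∫ H(a, x) x^{σ-1} dx|`.
-/

open Real Set Filter Asymptotics Topology MeasureTheory HurwitzZeta

theorem HasMellin.congr_Ioi {E : Type*} [NormedAddCommGroup E] [NormedSpace ℂ E] {f g : ℝ → E}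
    {s : ℂ} {m : E} (hf : HasMellin f s m) (hfg : EqOn f g (Ioi 0)) : HasMellin g s m := by
  have h : EqOn (fun t : ℝ => (t : ℂ) ^ (s - 1) • f t) (fun t => (t : ℂ) ^ (s - 1) • g t)
      (Ioi 0) := fun t ht => by simp only [hfg ht]
  exact ⟨hf.1.congr_fun h measurableSet_Ioi,
    (setIntegral_congr_fun measurableSet_Ioi h).symm.trans hf.2⟩

theorem hasMellin_one_Ioi {s : ℂ} (hs : s.re < 0) :
    HasMellin ((Ioi 1).indicator fun _ => 1 : ℝ → ℂ) s (-1 / s) := by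
  have hs' : (s - 1).re < -1 := by rw [Complex.sub_re, Complex.one_re]; linarith
  simp_rw [HasMellin, mellin, MellinConvergent, ← indicator_smul, IntegrableOn,
    integrable_indicator_iff measurableSet_Ioi, smul_eq_mul, integral_indicator measurableSet_Ioi,
    mul_one, IntegrableOn, Measure.restrict_restrict_of_subset (Ioi_subset_Ioi zero_le_one)]
  refine ⟨integrableOn_Ioi_cpow_of_lt hs' one_pos, ?_⟩
  rw [integral_Ioi_cpow_of_lt hs' one_pos, sub_add_cancel, Complex.ofReal_one, Complex.one_cpow,
    neg_div]

theorem hasMellin_cpow_Ioi (a : ℂ) {s : ℂ} (hs : s.re + a.re < 0) :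
    HasMellin ((Ioi 1).indicator fun t => (t : ℂ) ^ a) s (-1 / (s + a)) := by
  have := hasMellin_one_Ioi (by rwa [Complex.add_re] : (s + a).re < 0)
  simp_rw [HasMellin, ← MellinConvergent.cpow_smul, ← mellin_cpow_smul, ← indicator_smul,
    smul_eq_mul, mul_one] at this
  exact this

theorem norm_mellin_ofReal_le_of_nonneg {f : ℝ → ℝ} (hf : ∀ t ∈ Ioi 0, 0 ≤ f t)
    (s : ℂ) :
    ‖mellin (fun t => (f t : ℂ)) s‖ ≤ ‖mellin (fun t => (f t : ℂ)) s.re‖ := by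
  have hre : mellin (fun t => (f t : ℂ)) s.re =
      ((∫ t in Ioi 0, t ^ (s.re - 1) * f t : ℝ) : ℂ) := by
    rw [mellin, integral_complex_ofReal.symm]
    refine setIntegral_congr_fun measurableSet_Ioi fun t ht => ?_
    rw [smul_eq_mul, Complex.ofReal_mul, Complex.ofReal_cpow (le_of_lt ht)]
    push_cast
    rfl
  calc ‖mellin (fun t => (f t : ℂ)) s‖
        ≤ ∫ t in Ioi (0 : ℝ), ‖(t : ℂ) ^ (s - 1) • (f t : ℂ)‖ :=
          norm_integral_le_integral_norm _
    _ = ∫ t in Ioi (0 : ℝ), t ^ (s.re - 1) * f t := by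
        refine setIntegral_congr_fun measurableSet_Ioi fun t ht => ?_
        rw [norm_smul, Complex.norm_cpow_eq_rpow_re_of_pos ht, Complex.norm_real,
          norm_of_nonneg (hf t ht), Complex.sub_re, Complex.one_re]
    _ = ‖mellin (fun t => (f t : ℂ)) s.re‖ := by
        rw [hre, Complex.norm_real, norm_of_nonneg (setIntegral_nonneg measurableSet_Ioi
          fun t ht => mul_nonneg (rpow_nonneg (le_of_lt ht) _) (hf t ht))]

theorem norm_mellin_ofReal_le_of_nonpos {f : ℝ → ℝ} (hf : ∀ t ∈ Ioi 0, f t ≤ 0)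
    (s : ℂ) :
    ‖mellin (fun t => (f t : ℂ)) s‖ ≤ ‖mellin (fun t => (f t : ℂ)) s.re‖ := by
  simpa [mellin, integral_neg] using
    norm_mellin_ofReal_le_of_nonneg (f := -f) (fun t ht => neg_nonneg.2 (hf t ht)) s

lemma isPreconnected_re_pos_diff_one : IsPreconnected ({s : ℂ | 0 < s.re} \ {1}) := by
  have hP := (convex_halfSpace_re_gt 0).inter (convex_halfSpace_im_gt 0)
  have hN := (convex_halfSpace_re_gt 0).inter (convex_halfSpace_im_lt 0)
  have hS := (convex_halfSpace_re_gt 0).inter (convex_halfSpace_re_lt 1)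
  have hR := convex_halfSpace_re_gt 1
  have hU : {s : ℂ | 0 < s.re} \ {1} = (({s | 0 < s.re} ∩ {s | 0 < s.im} ∪ {s | 1 < s.re}) ∪
      {s | 0 < s.re} ∩ {s | s.re < 1}) ∪ {s | 0 < s.re} ∩ {s | s.im < 0} := by
    ext z
    simp only [Set.mem_sdiff, mem_ofPred_eq, mem_singleton_iff, mem_union, mem_inter_iff,
      Complex.ext_iff, Complex.one_re, Complex.one_im]
    grind
  rw [hU]
  exact ((hP.isPreconnected.union (2 + Complex.I) (by norm_num) (by norm_num)
    hR.isPreconnected).union (1 / 2 + Complex.I) (by norm_num) (by norm_num)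
    hS.isPreconnected).union (1 / 2 - Complex.I) (by norm_num) (by norm_num) hN.isPreconnected

noncomputable def hurwitzKernel (a x : ℝ) : ℝ := exp (-(a * x)) / (1 - exp (-x))

noncomputable def regHurwitzKernel (a x : ℝ) : ℝ := hurwitzKernel a x - 1 / x

section Kernel

variable {a x : ℝ}

lemma one_sub_exp_neg_pos (hx : 0 < x) : 0 < 1 - exp (-x) := by
  simpa using hx

lemma mul_exp_neg_le_one_sub_exp_neg (x : ℝ) : x * exp (-x) ≤ 1 - exp (-x) := by
  have h := mul_le_mul_of_nonneg_right (add_one_le_exp x) (exp_pos (-x)).le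
  rw [← exp_add, add_neg_cancel, exp_zero] at h
  linarith

lemma mul_exp_neg_mul_le_one_sub_exp_neg (ha : 1 / 2 ≤ a) (hx : 0 ≤ x) :
    x * exp (-(a * x)) ≤ 1 - exp (-x) := by
  have hsinh : x ≤ exp (x / 2) - exp (-(x / 2)) := by
    have := (self_le_sinh_iff (x := x / 2)).2 (by linarith)
    rw [sinh_eq] at this; linarith
  calc x * exp (-(a * x)) ≤ x * exp (-(x / 2)) := by gcongr; nlinarith
    _ ≤ (exp (x / 2) - exp (-(x / 2))) * exp (-(x / 2)) := by gcongr
    _ = 1 - exp (-x) := by rw [sub_mul, ← exp_add, ← exp_add]; ring_nf; rw [exp_zero]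

lemma hurwitzKernel_nonneg (hx : 0 < x) : 0 ≤ hurwitzKernel a x :=
  div_nonneg (exp_pos _).le (one_sub_exp_neg_pos hx).le

lemma regHurwitzKernel_nonpos (ha : 1 / 2 ≤ a) (hx : 0 < x) : regHurwitzKernel a x ≤ 0 := by
  rw [regHurwitzKernel, hurwitzKernel, sub_nonpos, div_le_div_iff₀ (one_sub_exp_neg_pos hx) hx,
    one_mul, mul_comm]
  exact mul_exp_neg_mul_le_one_sub_exp_neg ha hx.le

lemma regHurwitzKernel_eq_div (hx : 0 < x) : regHurwitzKernel a x =
    (x * exp (-(a * x)) - (1 - exp (-x))) / (x * (1 - exp (-x))) := by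
  have := (one_sub_exp_neg_pos hx).ne'
  rw [regHurwitzKernel, hurwitzKernel]
  field_simp

lemma abs_regHurwitzKernel_le_exp (ha0 : 0 ≤ a) (ha1 : a ≤ 1) (hx : 0 < x) :
    |regHurwitzKernel a x| ≤ exp x := by
  have hd : 0 < x * (1 - exp (-x)) := mul_pos hx (one_sub_exp_neg_pos hx)
  have hd_ge : x ^ 2 ≤ exp x * (x * (1 - exp (-x))) := by
    calc x ^ 2 = exp x * (x * (x * exp (-x))) := by
          rw [mul_left_comm, mul_left_comm (exp x), ← exp_add, add_neg_cancel, exp_zero]; ring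
      _ ≤ exp x * (x * (1 - exp (-x))) := by gcongr; exact mul_exp_neg_le_one_sub_exp_neg x
  have hnum_ge : -x ^ 2 ≤ x * exp (-(a * x)) - (1 - exp (-x)) := by
    have h1 := one_sub_le_exp_neg x
    have h2 := one_sub_le_exp_neg (a * x)
    nlinarith
  have hnum_le : x * exp (-(a * x)) - (1 - exp (-x)) ≤ x * (1 - exp (-x)) := by
    have h1 := mul_exp_neg_le_one_sub_exp_neg x
    have h2 : exp (-(a * x)) ≤ 1 := exp_le_one_iff.2 (by nlinarith)
    nlinarith
  rw [regHurwitzKernel_eq_div hx, abs_le, le_div_iff₀ hd, div_le_iff₀ hd]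
  constructor
  · linarith
  · nlinarith [add_one_le_exp x]

lemma hurwitzKernel_le_mul_exp (hx : 1 ≤ x) :
    hurwitzKernel a x ≤ (1 - exp (-1))⁻¹ * exp (-a * x) := by
  rw [hurwitzKernel, div_eq_inv_mul, neg_mul]
  gcongr
  exact one_sub_exp_neg_pos one_pos

lemma hasSum_hurwitzKernel (hx : 0 < x) :
    HasSum (fun n : ℕ => exp (-(n + a) * x)) (hurwitzKernel a x) := by
  have h := (hasSum_geometric_of_lt_one (exp_pos (-x)).le
    (exp_lt_one_iff.2 (by linarith))).mul_left (exp (-(a * x)))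
  have hterm (n : ℕ) : exp (-(a * x)) * exp (-x) ^ n = exp (-(n + a) * x) := by
    rw [← exp_nat_mul, ← exp_add]; ring_nf
  simpa only [hterm, hurwitzKernel, div_eq_mul_inv] using h

lemma continuousOn_hurwitzKernel : ContinuousOn (hurwitzKernel a) (Ioi 0) :=
  ContinuousOn.div (by fun_prop) (by fun_prop) fun _ hx => (one_sub_exp_neg_pos hx).ne'

end Kernel

lemma mellin_hurwitzKernel {a : ℝ} (ha0 : 0 < a) (ha1 : a ≤ 1) {s : ℂ} (hs : 1 < s.re) :
    mellin (fun x => (hurwitzKernel a x : ℂ)) s = Complex.Gamma s * hurwitzZeta a s := by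
  have hF : ∀ x ∈ Ioi (0 : ℝ), HasSum (fun n : ℕ => 1 * (exp (-(n + a) * x) : ℂ))
      (hurwitzKernel a x) := fun x hx => by
    simpa using Complex.hasSum_ofReal.2 (hasSum_hurwitzKernel (a := a) hx)
  have hsum : Summable fun n : ℕ => ‖(1 : ℂ)‖ / (n + a) ^ s.re := by
    refine ((summable_one_div_nat_add_rpow a s.re).2 hs).congr fun n => ?_
    rw [norm_one, abs_of_pos (by positivity)]
  refine (hasSum_mellin (fun n => Or.inr (by positivity)) (by linarith) hF hsum).unique ?_
  convert (hasSum_hurwitzZeta_of_one_lt_re ⟨ha0.le, ha1⟩ hs).mul_left (Complex.Gamma s) using 1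
  · rfl -- the two `AddCommMonoid ℂ` instances, which agree only up to unfolding
  · push_cast
    simp only [div_eq_mul_inv, mul_one, one_mul]

noncomputable def truncHurwitzKernel (a x : ℝ) : ℂ :=
  hurwitzKernel a x - (Ioc 0 1).indicator (fun t : ℝ => (t : ℂ) ^ (-1 : ℂ)) x

section TruncKernel

variable {a : ℝ}

lemma truncHurwitzKernel_of_one_lt {x : ℝ} (hx : 1 < x) :
    truncHurwitzKernel a x = hurwitzKernel a x := by
  rw [truncHurwitzKernel, indicator_of_notMem (fun h => hx.not_ge h.2), sub_zero]

lemma truncHurwitzKernel_of_le_one {x : ℝ} (hx0 : 0 < x) (hx : x ≤ 1) :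
    truncHurwitzKernel a x = regHurwitzKernel a x := by
  rw [truncHurwitzKernel, indicator_of_mem (show x ∈ Ioc 0 1 from ⟨hx0, hx⟩),
    Complex.cpow_neg_one, regHurwitzKernel]
  push_cast
  rw [one_div]

lemma truncHurwitzKernel_isBigO_atTop :
    truncHurwitzKernel a =O[atTop] fun t => exp (-a * t) := by
  refine IsBigO.of_bound (1 - exp (-1))⁻¹ ?_
  filter_upwards [eventually_gt_atTop 1] with x hx
  rw [truncHurwitzKernel_of_one_lt hx, Complex.norm_real, norm_of_nonneg
    (hurwitzKernel_nonneg (by linarith)), norm_of_nonneg (exp_pos _).le]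
  exact hurwitzKernel_le_mul_exp hx.le

lemma truncHurwitzKernel_isBigO_nhdsGT_zero (ha0 : 0 ≤ a) (ha1 : a ≤ 1) :
    truncHurwitzKernel a =O[𝓝[>] 0] (· ^ (-(0 : ℝ))) := by
  refine IsBigO.of_bound (exp 1) ?_
  filter_upwards [Ioo_mem_nhdsGT one_pos] with x hx
  rw [truncHurwitzKernel_of_le_one hx.1 hx.2.le, Complex.norm_real, norm_eq_abs, neg_zero,
    rpow_zero, norm_one, mul_one]
  exact (abs_regHurwitzKernel_le_exp ha0 ha1 hx.1).trans (exp_le_exp.2 hx.2.le)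

lemma locallyIntegrableOn_truncHurwitzKernel :
    LocallyIntegrableOn (truncHurwitzKernel a) (Ioi 0) := by
  have hK : LocallyIntegrableOn (fun x => (hurwitzKernel a x : ℂ)) (Ioi 0) :=
    (Complex.continuous_ofReal.comp_continuousOn continuousOn_hurwitzKernel).locallyIntegrableOn
      measurableSet_Ioi
  have hpow : LocallyIntegrableOn (fun t : ℝ => (t : ℂ) ^ (-1 : ℂ)) (Ioi 0) :=
    ContinuousOn.locallyIntegrableOn (fun t ht => (Complex.continuousAt_ofReal_cpow_const _ _
      (Or.inr (ne_of_gt ht))).continuousWithinAt) measurableSet_Ioi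
  refine hK.sub fun x hx => ?_
  obtain ⟨u, hu, hint⟩ := hpow x hx
  exact ⟨u, hu, hint.indicator measurableSet_Ioc⟩

lemma mellinConvergent_truncHurwitzKernel (ha0 : 0 < a) (ha1 : a ≤ 1) {s : ℂ}
    (hs : 0 < s.re) : MellinConvergent (truncHurwitzKernel a) s :=
  mellinConvergent_of_isBigO_rpow_exp ha0 locallyIntegrableOn_truncHurwitzKernel
    truncHurwitzKernel_isBigO_atTop (truncHurwitzKernel_isBigO_nhdsGT_zero ha0.le ha1) hs

lemma differentiableAt_mellin_truncHurwitzKernel (ha0 : 0 < a) (ha1 : a ≤ 1) {s : ℂ}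
    (hs : 0 < s.re) : DifferentiableAt ℂ (mellin (truncHurwitzKernel a)) s :=
  mellin_differentiableAt_of_isBigO_rpow_exp ha0 locallyIntegrableOn_truncHurwitzKernel
    truncHurwitzKernel_isBigO_atTop (truncHurwitzKernel_isBigO_nhdsGT_zero ha0.le ha1) hs

end TruncKernel

section Continuation

variable {a : ℝ} {s : ℂ}

lemma gamma_mul_hurwitzZeta_eq_mellin_truncHurwitzKernel_of_one_lt_re (ha0 : 0 < a)
    (ha1 : a ≤ 1) (hs : 1 < s.re) :
    Complex.Gamma s * hurwitzZeta a s = mellin (truncHurwitzKernel a) s + 1 / (s - 1) := by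
  have hpow := hasMellin_cpow_Ioc (-1) (s := s) (by rw [Complex.neg_re, Complex.one_re]; linarith)
  obtain ⟨-, h⟩ :=
    hasMellin_add (mellinConvergent_truncHurwitzKernel ha0 ha1 (by linarith)) hpow.1
  simp_rw [truncHurwitzKernel, sub_add_cancel] at h
  rw [← mellin_hurwitzKernel ha0 ha1 hs, h, hpow.2, ← sub_eq_add_neg]

lemma gamma_mul_hurwitzZeta_eq_mellin_truncHurwitzKernel (ha0 : 0 < a) (ha1 : a ≤ 1)
    (hs : 0 < s.re) (hs1 : s ≠ 1) :
    Complex.Gamma s * hurwitzZeta a s = mellin (truncHurwitzKernel a) s + 1 / (s - 1) := by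
  set U : Set ℂ := {s : ℂ | 0 < s.re} \ {1}
  have hUo : IsOpen U :=
    (isOpen_lt continuous_const Complex.continuous_re).sdiff isClosed_singleton
  have hlhs : AnalyticOnNhd ℂ (fun s => Complex.Gamma s * hurwitzZeta a s) U := by
    refine DifferentiableOn.analyticOnNhd (fun z hz => ?_) hUo
    have hΓ : DifferentiableAt ℂ Complex.Gamma z :=
      Complex.differentiableAt_Gamma z fun m hm => by
        have h0 : 0 < z.re := hz.1
        rw [hm, Complex.neg_re, Complex.natCast_re] at h0
        linarith [Nat.cast_nonneg (α := ℝ) m]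
    exact (hΓ.mul (differentiableAt_hurwitzZeta _ hz.2)).differentiableWithinAt
  have hrhs : AnalyticOnNhd ℂ (fun s => mellin (truncHurwitzKernel a) s + 1 / (s - 1)) U := by
    refine DifferentiableOn.analyticOnNhd (fun z hz => ?_) hUo
    exact ((differentiableAt_mellin_truncHurwitzKernel ha0 ha1 hz.1).add
      ((differentiableAt_const 1).div (differentiableAt_id.sub_const 1)
        (sub_ne_zero.2 hz.2))).differentiableWithinAt
  have h2 : (2 : ℂ) ∈ U := ⟨by norm_num, by norm_num⟩
  have hV : {z : ℂ | 1 < z.re} ∈ 𝓝 (2 : ℂ) :=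
    (isOpen_lt continuous_const Complex.continuous_re).mem_nhds (by norm_num)
  exact hlhs.eqOn_of_preconnected_of_eventuallyEq hrhs isPreconnected_re_pos_diff_one h2
    (eventually_of_mem hV fun z hz =>
      gamma_mul_hurwitzZeta_eq_mellin_truncHurwitzKernel_of_one_lt_re ha0 ha1 hz) ⟨hs, hs1⟩

lemma mellin_regHurwitzKernel (ha0 : 0 < a) (ha1 : a ≤ 1) (hs0 : 0 < s.re) (hs1 : s.re < 1) :
    mellin (fun x => (regHurwitzKernel a x : ℂ)) s = Complex.Gamma s * hurwitzZeta a s := by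
  have hpow := hasMellin_cpow_Ioi (-1) (s := s) (by rw [Complex.neg_re, Complex.one_re]; linarith)
  have h := (hasMellin_sub (mellinConvergent_truncHurwitzKernel ha0 ha1 hs0) hpow.1).congr_Ioi
    (g := fun x => (regHurwitzKernel a x : ℂ)) fun x (hx : 0 < x) => by
      rcases le_or_gt x 1 with hx1 | hx1
      · simp [truncHurwitzKernel_of_le_one hx hx1,
          indicator_of_notMem (fun h : x ∈ Ioi 1 => hx1.not_gt h)]
      · simp [truncHurwitzKernel_of_one_lt hx1, indicator_of_mem (show x ∈ Ioi 1 from hx1),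
          regHurwitzKernel, Complex.cpow_neg_one]
  rw [h.2, hpow.2, gamma_mul_hurwitzZeta_eq_mellin_truncHurwitzKernel ha0 ha1 hs0 ?_]
  · ring
  · rintro rfl; simp at hs1

end Continuation

/-- Let 1/2 ≤ a ≤ 1 and 0 < σ < 1. Then for all real t,
|Γ(σ + it) ζ(σ + it, a)| ≤ Γ(σ)|ζ(σ, a)|. -/
theorem abs_gamma_hurwitzZeta_le (a σ : ℝ) (ha : 1 / 2 ≤ a) (ha1 : a ≤ 1)
    (hσ0 : 0 < σ) (hσ1 : σ < 1) (t : ℝ) :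
    ‖Complex.Gamma (σ + t * Complex.I)
        * HurwitzZeta.hurwitzZeta (a : UnitAddCircle) (σ + t * Complex.I)‖
      ≤ Real.Gamma σ
        * ‖HurwitzZeta.hurwitzZeta (a : UnitAddCircle) (σ : ℂ)‖ := by
  have ha0 : 0 < a := by linarith
  have hre : (σ + t * Complex.I).re = σ := by simp
  calc ‖Complex.Gamma (σ + t * Complex.I) * hurwitzZeta a (σ + t * Complex.I)‖
      = ‖mellin (fun x => (regHurwitzKernel a x : ℂ)) (σ + t * Complex.I)‖ := by
        rw [mellin_regHurwitzKernel ha0 ha1 (by rwa [hre]) (by rwa [hre])]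
    _ ≤ ‖mellin (fun x => (regHurwitzKernel a x : ℂ)) σ‖ := by
        simpa only [hre] using
          norm_mellin_ofReal_le_of_nonpos (fun x hx => regHurwitzKernel_nonpos ha hx)
            (σ + t * Complex.I)
    _ = ‖Complex.Gamma σ * hurwitzZeta a σ‖ := by
        rw [mellin_regHurwitzKernel ha0 ha1 (by simpa) (by simpa)]
    _ = Real.Gamma σ * ‖hurwitzZeta a σ‖ := by
        rw [norm_mul, Complex.Gamma_ofReal, Complex.norm_real,
          norm_of_nonneg (Real.Gamma_pos_of_pos hσ0).le]
end

section
/- If 1/2 ≤ a ≤ 1, 0 < σ₁ < 1, σ₂ > 1, and 1 < σ₁ + σ₂ < 2, then the analytically continued Euler–Zagier double zeta value ζ₂(σ₁,σ₂; a) is negative, where Γ(σ₁)Γ(σ₂)ζ₂(σ₁,σ₂;a) = ∫_0^∞∫_0^∞ [ (y^{σ₂-1}/(e^y−1))H(a,x+y)x^{σ₁-1} + (x^{σ₁-1}/(x+y))H(1,y)y^{σ₂-1} ] dx dy. -/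
/-!
For `a ≥ 1/2` the kernel `H(a, t)` is negative, since `e^{(1-a)t} ≤ e^{t/2}` and
`t e^{t/2} < e^t - 1`; hence the integrand is negative on `(0, ∞)²`. It is also integrable there:
`|H(a, t)| ≤ min 1 t⁻¹` for `a ≤ 1`, and splitting the kernel `(x + y)⁻¹ ≤ x^{-θ} y^{θ-1}` with
`θ = 0` near `x = 0` and `σ₁ < θ < 2 - σ₂` near `x = ∞` dominates the integrand by a sum of
products of integrable functions of `x` and of `y`. So the double integral is negative, and
`Γ(σ₁) Γ(σ₂) > 0`.
-/

open MeasureTheory Set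

lemma integral_neg_of_ae_neg {α : Type*} [MeasurableSpace α] {μ : Measure α} {f : α → ℝ}
    (hμ : μ ≠ 0) (hf : Integrable f μ) (h : ∀ᵐ x ∂μ, f x < 0) : ∫ x, f x ∂μ < 0 := by
  have hsupp : Function.support (fun x => -f x) =ᵐ[μ] (univ : Set α) :=
    ae_eq_univ.2 (ae_iff.1 (h.mono fun x hx => neg_ne_zero.2 hx.ne))
  have hpos : 0 < ∫ x, -f x ∂μ := by
    rw [integral_pos_iff_support_of_nonneg_ae (h.mono fun x hx => (neg_pos.2 hx).le) hf.neg,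
      measure_congr hsupp]
    exact Measure.measure_univ_pos.2 hμ
  rwa [integral_neg, neg_pos] at hpos

lemma integral_integral_neg {α β : Type*} [MeasurableSpace α] [MeasurableSpace β]
    {μ : Measure α} {ν : Measure β} [SFinite μ] [SFinite ν] (hμ : μ ≠ 0) (hν : ν ≠ 0)
    {f : α → β → ℝ} (hf : Integrable (Function.uncurry f) (μ.prod ν))
    (hneg : ∀ᵐ x ∂μ, ∀ᵐ y ∂ν, f x y < 0) : ∫ x, ∫ y, f x y ∂ν ∂μ < 0 := by
  refine integral_neg_of_ae_neg hμ hf.integral_prod_left ?_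
  filter_upwards [hneg, hf.prod_right_ae] with x hx hfx
  exact integral_neg_of_ae_neg hν hfx hx

section

open Real

noncomputable def hurwitzH (a t : ℝ) : ℝ := exp ((1 - a) * t) / (exp t - 1) - 1 / t

lemma exp_sub_one_pos {t : ℝ} (ht : 0 < t) : 0 < exp t - 1 :=
  sub_pos.2 (one_lt_exp_iff.2 ht)

/-- Equivalent to `t / 2 < sinh (t / 2)`. -/
lemma mul_exp_half_lt_exp_sub_one {t : ℝ} (ht : 0 < t) : t * exp (t / 2) < exp t - 1 := by
  have hsinh : t / 2 < sinh (t / 2) := self_lt_sinh_iff.2 (half_pos ht)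
  have hexp : exp t - 1 = 2 * sinh (t / 2) * exp (t / 2) := by
    rw [sinh_eq, mul_div_cancel₀ _ two_ne_zero, sub_mul, ← exp_add, ← exp_add]
    norm_num
  rw [hexp]
  exact mul_lt_mul_of_pos_right (by linarith) (exp_pos _)

lemma hurwitzH_neg {a t : ℝ} (ha : 1 / 2 ≤ a) (ht : 0 < t) : hurwitzH a t < 0 := by
  have hnum : exp ((1 - a) * t) ≤ exp (t / 2) := exp_le_exp.2 (by nlinarith)
  rw [hurwitzH, sub_neg, div_lt_div_iff₀ (exp_sub_one_pos ht) ht, one_mul]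
  calc exp ((1 - a) * t) * t ≤ t * exp (t / 2) := by nlinarith
    _ < exp t - 1 := mul_exp_half_lt_exp_sub_one ht

lemma neg_inv_le_hurwitzH (a : ℝ) {t : ℝ} (ht : 0 < t) : -t⁻¹ ≤ hurwitzH a t := by
  have : 0 < exp ((1 - a) * t) / (exp t - 1) := div_pos (exp_pos _) (exp_sub_one_pos ht)
  rw [hurwitzH, one_div]
  linarith

lemma neg_one_le_hurwitzH {a t : ℝ} (ha : a ≤ 1) (ht : 0 < t) : -1 ≤ hurwitzH a t := by
  have he := exp_sub_one_pos ht
  have hnum : 1 ≤ exp ((1 - a) * t) := one_le_exp_iff.2 (by nlinarith)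
  -- `(1 - t) * exp t ≤ 1` is `1 - t ≤ exp (-t)`
  have hkey : (1 - t) * (exp t - 1) ≤ t := by
    have h1 : 1 - t ≤ exp (-t) := by linarith [add_one_le_exp (-t)]
    have h2 : exp t * exp (-t) = 1 := by rw [← exp_add]; simp
    nlinarith [exp_pos t]
  have hlow : 1 / t - 1 ≤ 1 / (exp t - 1) := by
    rw [div_sub_one ht.ne', div_le_div_iff₀ ht he]
    linarith
  have : 1 / (exp t - 1) ≤ exp ((1 - a) * t) / (exp t - 1) := by gcongr
  rw [hurwitzH]
  linarith

lemma abs_hurwitzH_le {a t : ℝ} (ha : 1 / 2 ≤ a) (ha1 : a ≤ 1) (ht : 0 < t) :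
    |hurwitzH a t| ≤ min 1 t⁻¹ := by
  refine abs_le.2 ⟨?_, (hurwitzH_neg ha ht).le.trans (le_min zero_le_one (inv_pos.2 ht).le)⟩
  rcases min_choice 1 t⁻¹ with h | h <;> rw [h]
  · exact neg_one_le_hurwitzH ha1 ht
  · exact neg_inv_le_hurwitzH a ht

lemma integrableOn_Ioi_min_rpow {p q : ℝ} (hp : -1 < p) (hq : q < -1) :
    IntegrableOn (fun x : ℝ => min (x ^ p) (x ^ q)) (Ioi 0) := by
  have hmeas : AEStronglyMeasurable (fun x : ℝ => min (x ^ p) (x ^ q)) := by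
    fun_prop
  rw [← Ioc_union_Ioi_eq_Ioi zero_le_one, integrableOn_union]
  constructor
  · have hint : IntegrableOn (fun x : ℝ => x ^ p) (Ioc 0 1) :=
      (intervalIntegrable_iff_integrableOn_Ioc_of_le zero_le_one).1
        (intervalIntegral.intervalIntegrable_rpow' hp)
    refine hint.mono' hmeas.restrict (ae_restrict_of_forall_mem measurableSet_Ioc fun x hx => ?_)
    rw [Real.norm_of_nonneg (le_min (rpow_nonneg hx.1.le _) (rpow_nonneg hx.1.le _))]
    exact min_le_left _ _
  · refine (integrableOn_Ioi_rpow_of_lt hq one_pos).mono' hmeas.restrict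
      (ae_restrict_of_forall_mem measurableSet_Ioi fun x hx => ?_)
    have hx0 : (0 : ℝ) < x := one_pos.trans hx
    rw [Real.norm_of_nonneg (le_min (rpow_nonneg hx0.le _) (rpow_nonneg hx0.le _))]
    exact min_le_right _ _

lemma rpow_mul_min_rpow {x : ℝ} (hx : 0 < x) (s p q : ℝ) :
    x ^ s * min (x ^ p) (x ^ q) = min (x ^ (s + p)) (x ^ (s + q)) := by
  rw [mul_min_of_nonneg _ _ (rpow_nonneg hx.le _), ← rpow_add hx, ← rpow_add hx]

lemma rpow_mul_min_one_inv {x : ℝ} (hx : 0 < x) (s : ℝ) :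
    x ^ s * min 1 x⁻¹ = min (x ^ s) (x ^ (s - 1)) := by
  rw [mul_min_of_nonneg _ _ (rpow_nonneg hx.le _), mul_one, rpow_sub_one hx.ne', div_eq_mul_inv]

lemma integrableOn_rpow_div_exp_sub_one {s : ℝ} (hs : 0 < s) :
    IntegrableOn (fun y : ℝ => y ^ s / (exp y - 1)) (Ioi 0) := by
  have hint : IntegrableOn (fun y : ℝ => y ^ (s - 1) * exp (-(1 / 2) * y ^ (1 : ℝ))) (Ioi 0) :=
    integrableOn_rpow_mul_exp_neg_mul_rpow (by linarith) one_pos one_half_pos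
  have hmeas : Measurable fun y : ℝ => y ^ s / (exp y - 1) := by fun_prop
  refine hint.mono' hmeas.aestronglyMeasurable
    (ae_restrict_of_forall_mem measurableSet_Ioi fun y hy => ?_)
  have hy0 : (0 : ℝ) < y := hy
  have he := exp_sub_one_pos hy0
  rw [Real.norm_of_nonneg (div_nonneg (rpow_nonneg hy0.le _) he.le), rpow_one,
    div_le_iff₀ he, rpow_sub_one hy0.ne']
  calc y ^ s = y ^ s / y * exp (-(1 / 2) * y) * (y * exp (y / 2)) := by
        rw [show y / 2 = -(-(1 / 2) * y) by ring, exp_neg]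
        field_simp
    _ ≤ y ^ s / y * exp (-(1 / 2) * y) * (exp y - 1) := by
        gcongr
        exact (mul_exp_half_lt_exp_sub_one hy0).le

lemma inv_add_le_rpow_mul_rpow {x y θ : ℝ} (hx : 0 < x) (hy : 0 < y) (hθ0 : 0 ≤ θ)
    (hθ1 : θ ≤ 1) : (x + y)⁻¹ ≤ x ^ (-θ) * y ^ (θ - 1) := by
  have hgm : x ^ θ * y ^ (1 - θ) ≤ x + y := by
    calc x ^ θ * y ^ (1 - θ) ≤ θ * x + (1 - θ) * y :=
          geom_mean_le_arith_mean2_weighted hθ0 (by linarith) hx.le hy.le (by ring)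
      _ ≤ x + y := by nlinarith
  calc (x + y)⁻¹ ≤ (x ^ θ * y ^ (1 - θ))⁻¹ := inv_anti₀ (by positivity) hgm
    _ = x ^ (-θ) * y ^ (θ - 1) := by
        rw [mul_inv, ← rpow_neg hx.le, ← rpow_neg hy.le, neg_sub]

lemma inv_add_le_min_rpow_mul_add_rpow {x y θ₁ θ₂ : ℝ} (hx : 0 < x) (hy : 0 < y)
    (hθ₁ : θ₁ ∈ Icc (0 : ℝ) 1) (hθ₂ : θ₂ ∈ Icc (0 : ℝ) 1) :
    (x + y)⁻¹ ≤ min (x ^ (-θ₁)) (x ^ (-θ₂)) * (y ^ (θ₁ - 1) + y ^ (θ₂ - 1)) := by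
  have h₁ := rpow_nonneg hy.le (θ₁ - 1)
  have h₂ := rpow_nonneg hy.le (θ₂ - 1)
  rcases min_choice (x ^ (-θ₁)) (x ^ (-θ₂)) with h | h <;> rw [h]
  · calc (x + y)⁻¹ ≤ x ^ (-θ₁) * y ^ (θ₁ - 1) := inv_add_le_rpow_mul_rpow hx hy hθ₁.1 hθ₁.2
      _ ≤ _ := by gcongr; linarith
  · calc (x + y)⁻¹ ≤ x ^ (-θ₂) * y ^ (θ₂ - 1) := inv_add_le_rpow_mul_rpow hx hy hθ₂.1 hθ₂.2
      _ ≤ _ := by gcongr; linarith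

noncomputable def doubleZetaIntegrand (a σ₁ σ₂ x y : ℝ) : ℝ :=
  y ^ (σ₂ - 1) / (exp y - 1) * hurwitzH a (x + y) * x ^ (σ₁ - 1)
    + x ^ (σ₁ - 1) / (x + y) * hurwitzH 1 y * y ^ (σ₂ - 1)

lemma doubleZetaIntegrand_neg {a σ₁ σ₂ x y : ℝ} (ha : 1 / 2 ≤ a) (hx : 0 < x) (hy : 0 < y) :
    doubleZetaIntegrand a σ₁ σ₂ x y < 0 := by
  have hxy := add_pos hx hy
  have h₁ : y ^ (σ₂ - 1) / (exp y - 1) * hurwitzH a (x + y) * x ^ (σ₁ - 1) < 0 :=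
    mul_neg_of_neg_of_pos
      (mul_neg_of_pos_of_neg (div_pos (rpow_pos_of_pos hy _) (exp_sub_one_pos hy))
        (hurwitzH_neg ha hxy))
      (rpow_pos_of_pos hx _)
  have h₂ : x ^ (σ₁ - 1) / (x + y) * hurwitzH 1 y * y ^ (σ₂ - 1) < 0 :=
    mul_neg_of_neg_of_pos
      (mul_neg_of_pos_of_neg (div_pos (rpow_pos_of_pos hx _) hxy) (hurwitzH_neg (by norm_num) hy))
      (rpow_pos_of_pos hy _)
  exact add_neg h₁ h₂

lemma abs_doubleZetaIntegrand_le {a σ₁ σ₂ x y θ₁ θ₂ : ℝ} (ha : 1 / 2 ≤ a) (ha1 : a ≤ 1)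
    (hθ₁ : θ₁ ∈ Icc (0 : ℝ) 1) (hθ₂ : θ₂ ∈ Icc (0 : ℝ) 1) (hx : 0 < x) (hy : 0 < y) :
    |doubleZetaIntegrand a σ₁ σ₂ x y|
      ≤ y ^ (σ₂ - 1) / (exp y - 1) * min (x ^ (σ₁ - 1)) (x ^ (σ₁ - 1 - 1))
        + (y ^ (θ₁ - 1) + y ^ (θ₂ - 1)) * min (y ^ (σ₂ - 1)) (y ^ (σ₂ - 1 - 1))
          * min (x ^ (σ₁ - 1 + -θ₁)) (x ^ (σ₁ - 1 + -θ₂)) := by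
  have hxy := add_pos hx hy
  have hψ := div_pos (rpow_pos_of_pos hy (σ₂ - 1)) (exp_sub_one_pos hy)
  have hx₁ := rpow_pos_of_pos hx (σ₁ - 1)
  have hy₁ := rpow_pos_of_pos hy (σ₂ - 1)
  have hH₁ : |hurwitzH a (x + y)| ≤ min 1 x⁻¹ :=
    (abs_hurwitzH_le ha ha1 hxy).trans (min_le_min le_rfl (inv_anti₀ hx (by linarith)))
  have hH₂ : |hurwitzH 1 y| ≤ min 1 y⁻¹ := abs_hurwitzH_le (by norm_num) le_rfl hy
  have hkernel := inv_add_le_min_rpow_mul_add_rpow hx hy hθ₁ hθ₂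
  rw [← rpow_mul_min_one_inv hx, ← rpow_mul_min_one_inv hy, ← rpow_mul_min_rpow hx]
  refine (abs_add_le _ _).trans (add_le_add ?_ ?_)
  · rw [abs_mul, abs_mul, abs_of_pos hψ, abs_of_pos hx₁]
    calc y ^ (σ₂ - 1) / (exp y - 1) * |hurwitzH a (x + y)| * x ^ (σ₁ - 1)
        ≤ y ^ (σ₂ - 1) / (exp y - 1) * min 1 x⁻¹ * x ^ (σ₁ - 1) := by gcongr
      _ = _ := by ring
  · rw [abs_mul, abs_mul, abs_of_pos (div_pos hx₁ hxy), abs_of_pos hy₁, div_eq_mul_inv]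
    calc x ^ (σ₁ - 1) * (x + y)⁻¹ * |hurwitzH 1 y| * y ^ (σ₂ - 1)
        ≤ x ^ (σ₁ - 1) * (min (x ^ (-θ₁)) (x ^ (-θ₂)) * (y ^ (θ₁ - 1) + y ^ (θ₂ - 1)))
            * min 1 y⁻¹ * y ^ (σ₂ - 1) := by gcongr
      _ = _ := by ring

lemma integrable_doubleZetaIntegrand {a σ₁ σ₂ : ℝ} (ha : 1 / 2 ≤ a) (ha1 : a ≤ 1)
    (hσ₁ : 0 < σ₁) (hσ₂ : 1 < σ₂) (hσ : σ₁ + σ₂ < 2) :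
    Integrable (Function.uncurry fun y x => doubleZetaIntegrand a σ₁ σ₂ x y)
      ((volume.restrict (Ioi 0)).prod (volume.restrict (Ioi 0))) := by
  -- `σ₁ < θ < 2 - σ₂` makes `x ^ (σ₁ - 1 - θ)` integrable at `∞` and `y ^ (θ + σ₂ - 3)` at `∞`
  set θ : ℝ := (σ₁ + 2 - σ₂) / 2 with hθ_def
  have hθ : θ ∈ Icc (0 : ℝ) 1 := ⟨by linarith, by linarith⟩
  have hψ₁ : IntegrableOn (fun y : ℝ => y ^ (σ₂ - 1) / (exp y - 1)) (Ioi 0) :=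
    integrableOn_rpow_div_exp_sub_one (by linarith)
  have hφ₁ : IntegrableOn (fun x : ℝ => min (x ^ (σ₁ - 1)) (x ^ (σ₁ - 1 - 1))) (Ioi 0) :=
    integrableOn_Ioi_min_rpow (by linarith) (by linarith)
  have hψ₂ : IntegrableOn (fun y : ℝ => (y ^ ((0 : ℝ) - 1) + y ^ (θ - 1))
      * min (y ^ (σ₂ - 1)) (y ^ (σ₂ - 1 - 1))) (Ioi 0) := by
    refine ((integrableOn_Ioi_min_rpow (p := 0 - 1 + (σ₂ - 1)) (q := 0 - 1 + (σ₂ - 1 - 1))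
      (by linarith) (by linarith)).add (integrableOn_Ioi_min_rpow (p := θ - 1 + (σ₂ - 1))
      (q := θ - 1 + (σ₂ - 1 - 1)) (by linarith) (by linarith))).congr_fun
      (fun y hy => ?_) measurableSet_Ioi
    rw [Pi.add_apply, add_mul, rpow_mul_min_rpow hy, rpow_mul_min_rpow hy]
  have hφ₂ : IntegrableOn (fun x : ℝ => min (x ^ (σ₁ - 1 + -0)) (x ^ (σ₁ - 1 + -θ))) (Ioi 0) :=
    integrableOn_Ioi_min_rpow (by linarith) (by linarith)
  have hmeas : Measurable (Function.uncurry fun y x => doubleZetaIntegrand a σ₁ σ₂ x y) := by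
    unfold Function.uncurry doubleZetaIntegrand hurwitzH
    fun_prop
  refine ((hψ₁.mul_prod hφ₁).add (hψ₂.mul_prod hφ₂)).mono' hmeas.aestronglyMeasurable ?_
  rw [Measure.prod_restrict]
  filter_upwards [ae_restrict_mem (measurableSet_Ioi.prod measurableSet_Ioi)] with ⟨y, x⟩ ⟨hy, hx⟩
  exact abs_doubleZetaIntegrand_le ha ha1 ⟨le_rfl, zero_le_one⟩ hθ hx hy

end

theorem doubleHurwitzZeta_neg_general (a σ₁ σ₂ : ℝ) (ha : 1 / 2 ≤ a) (ha1 : a ≤ 1)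
    (hσ₁0 : 0 < σ₁) (hσ₂ : 1 < σ₂)
    (hσ' : σ₁ + σ₂ < 2) (Z : ℝ)
    (hZ : Real.Gamma σ₁ * Real.Gamma σ₂ * Z
      = ∫ y in Ioi (0 : ℝ), ∫ x in Ioi (0 : ℝ),
          ((y ^ (σ₂ - 1) / (Real.exp y - 1))
              * (Real.exp ((1 - a) * (x + y)) / (Real.exp (x + y) - 1) - 1 / (x + y))
              * x ^ (σ₁ - 1)
            + (x ^ (σ₁ - 1) / (x + y))
              * (Real.exp ((1 - 1) * y) / (Real.exp y - 1) - 1 / y)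
              * y ^ (σ₂ - 1))) :
    Z < 0 := by
  change _ = ∫ y in Ioi (0 : ℝ), ∫ x in Ioi (0 : ℝ), doubleZetaIntegrand a σ₁ σ₂ x y at hZ
  have hvol : volume.restrict (Ioi (0 : ℝ)) ≠ 0 := by simp
  have hneg : Real.Gamma σ₁ * Real.Gamma σ₂ * Z < 0 := by
    rw [hZ]
    refine integral_integral_neg hvol hvol
      (integrable_doubleZetaIntegrand ha ha1 hσ₁0 hσ₂ hσ') ?_
    filter_upwards [ae_restrict_mem measurableSet_Ioi] with y hy
    filter_upwards [ae_restrict_mem measurableSet_Ioi] with x hx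
    exact doubleZetaIntegrand_neg ha hx hy
  exact neg_of_mul_neg_right hneg
    (mul_pos (Real.Gamma_pos_of_pos hσ₁0) (Real.Gamma_pos_of_pos (by linarith))).le

/-- If 1/2 ≤ a ≤ 1, 0 < σ₁ < 1, σ₂ > 1, 1 < σ₁ + σ₂ < 2, then the
analytically continued Euler–Zagier double zeta value ζ₂(σ₁,σ₂;a), given by
Γ(σ₁)Γ(σ₂)ζ₂(σ₁,σ₂;a) = ∫_0^∞∫_0^∞ [(y^{σ₂-1}/(e^y−1))H(a,x+y)x^{σ₁-1}
  + (x^{σ₁-1}/(x+y))H(1,y)y^{σ₂-1}] dx dy, is negative. -/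
theorem doubleHurwitzZeta_neg (a σ₁ σ₂ : ℝ) (ha : 1 / 2 ≤ a) (ha1 : a ≤ 1)
    (hσ₁0 : 0 < σ₁) (hσ₁1 : σ₁ < 1) (hσ₂ : 1 < σ₂)
    (hσ : 1 < σ₁ + σ₂) (hσ' : σ₁ + σ₂ < 2) (Z : ℝ)
    (hZ : Real.Gamma σ₁ * Real.Gamma σ₂ * Z
      = ∫ y in Ioi (0 : ℝ), ∫ x in Ioi (0 : ℝ),
          ((y ^ (σ₂ - 1) / (Real.exp y - 1))
              * (Real.exp ((1 - a) * (x + y)) / (Real.exp (x + y) - 1) - 1 / (x + y))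
              * x ^ (σ₁ - 1)
            + (x ^ (σ₁ - 1) / (x + y))
              * (Real.exp ((1 - 1) * y) / (Real.exp y - 1) - 1 / y)
              * y ^ (σ₂ - 1))) :
    Z < 0 :=
  doubleHurwitzZeta_neg_general a σ₁ σ₂ ha ha1 hσ₁0 hσ₂ hσ' Z hZ
end
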